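/- arXiv:2507.18363 — 8 statements merged into one kernel-verified Lean document; each statement's English description precedes it below -/
import Mathlib

section
/- Let f, m : ℝⁿ → ℝ and x̄ ∈ ℝⁿ with m(x̄) = f(x̄). Let H be a symmetric positive semidefinite real n×n matrix, let γ > 0 and δ ∈ (0,1). Suppose x⁺ ∈ ℝⁿ is a global minimizer of x ↦ m(x) + (γ/2)‖x−x̄‖²_H and that the acceptance criterion |f(x⁺) − m(x⁺)| ≤ δ·(γ/2)·‖x⁺−x̄‖²_H holds. Then f(x⁺) − f(x̄) ≤ −(1−δ)·(γ/2)·‖x⁺−x̄‖²_H ≤ 0. -/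
open Matrix

/-- The seminorm induced by a symmetric positive semidefinite matrix `H`:
`‖v‖_H = √⟨Hv, v⟩`. -/
noncomputable def hNorm {n : ℕ} (H : Matrix (Fin n) (Fin n) ℝ)
    (v : EuclideanSpace ℝ (Fin n)) : ℝ :=
  Real.sqrt ((H.mulVec v) ⬝ᵥ v)

theorem stmt0 {n : ℕ} (f m : EuclideanSpace ℝ (Fin n) → ℝ)
    (xbar xplus : EuclideanSpace ℝ (Fin n))
    (H : Matrix (Fin n) (Fin n) ℝ) (hH : H.PosSemidef)
    (γ δ : ℝ) (hγ : 0 < γ) (hδ : δ ∈ Set.Ioo (0 : ℝ) 1)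
    (hcenter : m xbar = f xbar)
    (hmin : ∀ x, m xplus + γ / 2 * (hNorm H (xplus - xbar)) ^ 2 ≤
      m x + γ / 2 * (hNorm H (x - xbar)) ^ 2)
    (haccept : |f xplus - m xplus| ≤ δ * (γ / 2) * (hNorm H (xplus - xbar)) ^ 2) :
    f xplus - f xbar ≤ -(1 - δ) * (γ / 2) * (hNorm H (xplus - xbar)) ^ 2 ∧
      -(1 - δ) * (γ / 2) * (hNorm H (xplus - xbar)) ^ 2 ≤ 0 := by
  obtain ⟨hδ0, hδ1⟩ := hδ
  set s := (hNorm H (xplus - xbar)) ^ 2 with hs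
  have hs0 : 0 ≤ s := sq_nonneg _
  have hzero : hNorm H (xbar - xbar) = 0 := by
    simp [hNorm, sub_self]
  have h1 := hmin xbar
  rw [hzero] at h1
  simp at h1
  -- h1 : m xplus + γ / 2 * s ≤ m xbar
  have h2 : f xplus - m xplus ≤ δ * (γ / 2) * s := (abs_le.mp haccept).2
  constructor
  · nlinarith [h1, h2, hcenter]
  · have : 0 ≤ (1 - δ) * (γ / 2) * s :=
      mul_nonneg (mul_nonneg (by linarith) (by linarith)) hs0
    linarith
end

section
/- Let f : ℝⁿ → ℝ be bounded from below, let δ ∈ (0,1), μ > 0 and γ_min > 0. Let (x^k)_{k∈ℕ} ⊂ ℝⁿ and, for each k, let H_k be a symmetric real n×n matrix with ⟨H_k v, v⟩ ≥ μ‖v‖² for all v, let γ_k ≥ γ_min, and let m_k : ℝⁿ → ℝ satisfy m_k(x^k) = f(x^k). Suppose that for every k, x^{k+1} is a global minimizer of x ↦ m_k(x) + (γ_k/2)‖x−x^k‖²_{H_k} and |f(x^{k+1}) − m_k(x^{k+1})| ≤ δ·(γ_k/2)·‖x^{k+1}−x^k‖²_{H_k}. Then the sequence (f(x^k))_{k∈ℕ}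 is nonincreasing, γ_k·‖x^{k+1}−x^k‖²_{H_k} → 0 as k → ∞, and ‖x^{k+1}−x^k‖ → 0 as k → ∞. -/
open Matrix Filter

open Set Topology

/-! Comparing the regularized model at `x^{k+1}` with its value at the center `x^k` and using the
acceptance test gives the sufficient decrease
`f(x^{k+1}) + (1 - δ) (γ_k / 2) ‖x^{k+1} - x^k‖²_{H_k} ≤ f(x^k)`.
Hence `f(x^k)` is nonincreasing, and since it is bounded below its successive differences tend
to `0`, which squeezes `γ_k ‖x^{k+1} - x^k‖²_{H_k}` to `0`; uniform positivity of `γ_k H_k` then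
controls the Euclidean step length. -/

theorem hNorm_zero {n : ℕ} (H : Matrix (Fin n) (Fin n) ℝ) : hNorm H 0 = 0 := by
  simp [hNorm]

theorem mul_norm_sq_le_hNorm_sq {n : ℕ} {H : Matrix (Fin n) (Fin n) ℝ}
    {v : EuclideanSpace ℝ (Fin n)} {μ : ℝ} (hμ : 0 ≤ μ) (h : μ * ‖v‖ ^ 2 ≤ H.mulVec v ⬝ᵥ v) :
    μ * ‖v‖ ^ 2 ≤ hNorm H v ^ 2 := by
  rwa [hNorm, Real.sq_sqrt (le_trans (by positivity) h)]

theorem add_one_sub_mul_le_of_model_step {E : Type*} {f m R : E → ℝ} {x x' : E} {δ : ℝ}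
    (hcenter : m x = f x) (hR : R x = 0) (hmin : m x' + R x' ≤ m x + R x)
    (haccept : |f x' - m x'| ≤ δ * R x') :
    f x' + (1 - δ) * R x' ≤ f x := by
  linarith [le_of_abs_le haccept]

section Descent

variable {a b : ℕ → ℝ} {c : ℝ}

theorem antitone_of_add_mul_le (hc : 0 ≤ c) (hb : ∀ k, 0 ≤ b k)
    (h : ∀ k, a (k + 1) + c * b k ≤ a k) : Antitone a :=
  antitone_nat_of_succ_le fun k => by nlinarith [hb k, h k]

theorem tendsto_zero_of_add_mul_le (hc : 0 < c) (hb : ∀ k, 0 ≤ b k)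
    (h : ∀ k, a (k + 1) + c * b k ≤ a k) (ha : BddBelow (range a)) :
    Tendsto b atTop (𝓝 0) := by
  have hlim := tendsto_atTop_ciInf (antitone_of_add_mul_le hc.le hb h) ha
  have hdiff : Tendsto (fun k => c⁻¹ * (a k - a (k + 1))) atTop (𝓝 0) := by
    simpa using (hlim.sub (hlim.comp (tendsto_add_atTop_nat 1))).const_mul c⁻¹
  refine squeeze_zero hb (fun k => ?_) hdiff
  rw [le_inv_mul_iff₀ hc]
  linarith [h k]

end Descent

theorem tendsto_norm_zero_of_mul_sq_le {ι : Type*} {l : Filter ι} {E : Type*}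
    [SeminormedAddCommGroup E] {v : ι → E} {b : ι → ℝ} {c : ℝ} (hc : 0 < c)
    (hv : ∀ i, c * ‖v i‖ ^ 2 ≤ b i) (hb : Tendsto b l (𝓝 0)) :
    Tendsto (fun i => ‖v i‖) l (𝓝 0) := by
  have hsqrt : Tendsto (fun i => √(c⁻¹ * b i)) l (𝓝 0) := by
    simpa using (hb.const_mul c⁻¹).sqrt
  refine squeeze_zero (fun i => norm_nonneg _) (fun i => ?_) hsqrt
  have hbi : 0 ≤ b i := (by positivity : 0 ≤ c * ‖v i‖ ^ 2).trans (hv i)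
  rw [Real.le_sqrt (norm_nonneg _) (mul_nonneg (inv_nonneg.2 hc.le) hbi), le_inv_mul_iff₀ hc]
  exact hv i

theorem stmt1_general {n : ℕ} (f : EuclideanSpace ℝ (Fin n) → ℝ)
    (hbdd : BddBelow (Set.range f))
    (δ μ γmin : ℝ) (hδ : δ ∈ Set.Ioo (0 : ℝ) 1) (hμ : 0 < μ) (hγmin : 0 < γmin)
    (x : ℕ → EuclideanSpace ℝ (Fin n))
    (H : ℕ → Matrix (Fin n) (Fin n) ℝ)
    (hHμ : ∀ k (v : EuclideanSpace ℝ (Fin n)), μ * ‖v‖ ^ 2 ≤ ((H k).mulVec v) ⬝ᵥ v)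
    (γ : ℕ → ℝ) (hγ : ∀ k, γmin ≤ γ k)
    (m : ℕ → EuclideanSpace ℝ (Fin n) → ℝ)
    (hcenter : ∀ k, m k (x k) = f (x k))
    (hmin : ∀ k y, m k (x (k + 1)) + γ k / 2 * (hNorm (H k) (x (k + 1) - x k)) ^ 2 ≤
      m k y + γ k / 2 * (hNorm (H k) (y - x k)) ^ 2)
    (haccept : ∀ k, |f (x (k + 1)) - m k (x (k + 1))| ≤
      δ * (γ k / 2) * (hNorm (H k) (x (k + 1) - x k)) ^ 2) :
    (Antitone fun k => f (x k)) ∧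
      Tendsto (fun k => γ k * (hNorm (H k) (x (k + 1) - x k)) ^ 2) atTop (nhds 0) ∧
      Tendsto (fun k => ‖x (k + 1) - x k‖) atTop (nhds 0) := by
  set b : ℕ → ℝ := fun k => γ k * hNorm (H k) (x (k + 1) - x k) ^ 2
  have hb : ∀ k, 0 ≤ b k := fun k => mul_nonneg (hγmin.trans_le (hγ k)).le (sq_nonneg _)
  have hdecrease : ∀ k, f (x (k + 1)) + (1 - δ) / 2 * b k ≤ f (x k) := fun k => by
    have hstep := add_one_sub_mul_le_of_model_step (R := fun y => γ k / 2 * hNorm (H k) (y - x k) ^ 2)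
      (δ := δ) (hcenter k) (by simp [hNorm_zero]) (hmin k (x k))
      (by simpa only [mul_assoc] using haccept k)
    linarith
  have hrate : 0 < (1 - δ) / 2 := by linarith [hδ.2]
  have hfx : BddBelow (range fun k => f (x k)) := hbdd.mono (range_comp_subset_range x f)
  have hb_tendsto := tendsto_zero_of_add_mul_le hrate hb hdecrease hfx
  refine ⟨antitone_of_add_mul_le hrate.le hb hdecrease, hb_tendsto,
    tendsto_norm_zero_of_mul_sq_le (mul_pos hγmin hμ) (fun k => ?_) hb_tendsto⟩
  have hHk := mul_norm_sq_le_hNorm_sq hμ.le (hHμ k (x (k + 1) - x k))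
  calc γmin * μ * ‖x (k + 1) - x k‖ ^ 2 ≤ γ k * (μ * ‖x (k + 1) - x k‖ ^ 2) := by
        rw [mul_assoc]; exact mul_le_mul_of_nonneg_right (hγ k) (by positivity)
    _ ≤ b k := mul_le_mul_of_nonneg_left hHk (hγmin.trans_le (hγ k)).le

theorem stmt1 {n : ℕ} (f : EuclideanSpace ℝ (Fin n) → ℝ)
    (hbdd : BddBelow (Set.range f))
    (δ μ γmin : ℝ) (hδ : δ ∈ Set.Ioo (0 : ℝ) 1) (hμ : 0 < μ) (hγmin : 0 < γmin)
    (x : ℕ → EuclideanSpace ℝ (Fin n))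
    (H : ℕ → Matrix (Fin n) (Fin n) ℝ)
    (hHsymm : ∀ k, (H k).IsSymm)
    (hHμ : ∀ k (v : EuclideanSpace ℝ (Fin n)), μ * ‖v‖ ^ 2 ≤ ((H k).mulVec v) ⬝ᵥ v)
    (γ : ℕ → ℝ) (hγ : ∀ k, γmin ≤ γ k)
    (m : ℕ → EuclideanSpace ℝ (Fin n) → ℝ)
    (hcenter : ∀ k, m k (x k) = f (x k))
    (hmin : ∀ k y, m k (x (k + 1)) + γ k / 2 * (hNorm (H k) (x (k + 1) - x k)) ^ 2 ≤
      m k y + γ k / 2 * (hNorm (H k) (y - x k)) ^ 2)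
    (haccept : ∀ k, |f (x (k + 1)) - m k (x (k + 1))| ≤
      δ * (γ k / 2) * (hNorm (H k) (x (k + 1) - x k)) ^ 2) :
    (Antitone fun k => f (x k)) ∧
      Tendsto (fun k => γ k * (hNorm (H k) (x (k + 1) - x k)) ^ 2) atTop (nhds 0) ∧
      Tendsto (fun k => ‖x (k + 1) - x k‖) atTop (nhds 0) :=
  stmt1_general f hbdd δ μ γmin hδ hμ hγmin x H hHμ γ hγ m hcenter hmin haccept
end

section
/- Let f : ℝⁿ → ℝ be lower semicontinuous and bounded from below, let δ ∈ (0,1), μ > 0, γ_min > 0. Let (x^k)_{k∈ℕ} ⊂ ℝⁿ, symmetric matrices H_k with ⟨H_k v, v⟩ ≥ μ‖v‖² for all v, scalars γ_k ≥ γ_min, and functions m_k : ℝⁿ → ℝ with m_k(x^k) = f(x^k), such that for every k, x^{k+1} is a global minimizer of x ↦ m_k(x) + (γ_k/2)‖x−x^k‖²_{H_k} and |f(x^{k+1}) − m_k(x^{k+1})| ≤ δ·(γ_k/2)·‖x^{k+1}−x^k‖²_{H_k}. If some subsequence (x^{k_j}) converges to a point x* ∈ ℝⁿ, then the whole sequence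 (f(x^k)) converges to a limit f* ∈ ℝ satisfying f* ≥ f(x*). -/
open Matrix Filter

theorem stmt2 {n : ℕ} (f : EuclideanSpace ℝ (Fin n) → ℝ)
    (hlsc : LowerSemicontinuous f)
    (hbdd : BddBelow (Set.range f))
    (δ μ γmin : ℝ) (hδ : δ ∈ Set.Ioo (0 : ℝ) 1) (hμ : 0 < μ) (hγmin : 0 < γmin)
    (x : ℕ → EuclideanSpace ℝ (Fin n))
    (H : ℕ → Matrix (Fin n) (Fin n) ℝ)
    (hHsymm : ∀ k, (H k).IsSymm)
    (hHμ : ∀ k (v : EuclideanSpace ℝ (Fin n)), μ * ‖v‖ ^ 2 ≤ ((H k).mulVec v) ⬝ᵥ v)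
    (γ : ℕ → ℝ) (hγ : ∀ k, γmin ≤ γ k)
    (m : ℕ → EuclideanSpace ℝ (Fin n) → ℝ)
    (hcenter : ∀ k, m k (x k) = f (x k))
    (hmin : ∀ k y, m k (x (k + 1)) + γ k / 2 * (hNorm (H k) (x (k + 1) - x k)) ^ 2 ≤
      m k y + γ k / 2 * (hNorm (H k) (y - x k)) ^ 2)
    (haccept : ∀ k, |f (x (k + 1)) - m k (x (k + 1))| ≤
      δ * (γ k / 2) * (hNorm (H k) (x (k + 1) - x k)) ^ 2)
    (xstar : EuclideanSpace ℝ (Fin n)) (φ : ℕ → ℕ) (hφ : StrictMono φ)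
    (hsub : Tendsto (fun j => x (φ j)) atTop (nhds xstar)) :
    ∃ fstar : ℝ, Tendsto (fun k => f (x k)) atTop (nhds fstar) ∧ f xstar ≤ fstar := by
  -- The sequence f (x k) is antitone
  have hdec : Antitone (fun k => f (x k)) := by
    apply antitone_nat_of_succ_le
    intro k
    have hs : (0:ℝ) ≤ (hNorm (H k) (x (k + 1) - x k)) ^ 2 := sq_nonneg _
    have hγk : (0:ℝ) ≤ γ k / 2 := by linarith [hγ k]
    have h1 : f (x (k+1)) - m k (x (k+1)) ≤ δ * (γ k / 2) * (hNorm (H k) (x (k + 1) - x k)) ^ 2 :=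
      le_trans (le_abs_self _) (haccept k)
    have h2 : m k (x (k+1)) + γ k / 2 * (hNorm (H k) (x (k + 1) - x k)) ^ 2 ≤ f (x k) := by
      have := hmin k (x k)
      have hz : hNorm (H k) (x k - x k) = 0 := by
        simp [hNorm]
      rw [hz] at this
      simpa [hcenter k] using this
    have h3 : δ * (γ k / 2) * (hNorm (H k) (x (k + 1) - x k)) ^ 2 ≤
        γ k / 2 * (hNorm (H k) (x (k + 1) - x k)) ^ 2 := by
      nlinarith [mul_nonneg hγk hs, hδ.1, hδ.2, mul_assoc δ (γ k / 2) ((hNorm (H k) (x (k + 1) - x k)) ^ 2)]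
    linarith
  have hbdd2 : BddBelow (Set.range fun k => f (x k)) := by
    obtain ⟨b, hb⟩ := hbdd
    exact ⟨b, by rintro _ ⟨k, rfl⟩; exact hb ⟨x k, rfl⟩⟩
  have hconv : Tendsto (fun k => f (x k)) atTop (nhds (⨅ k, f (x k))) :=
    tendsto_atTop_ciInf hdec hbdd2
  refine ⟨⨅ k, f (x k), hconv, ?_⟩
  have hsubconv : Tendsto (fun j => f (x (φ j))) atTop (nhds (⨅ k, f (x k))) :=
    hconv.comp hφ.tendsto_atTop
  by_contra hlt
  push_neg at hlt
  obtain ⟨c, hc1, hc2⟩ := exists_between hlt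
  have hev : ∀ᶠ j in atTop, c < f (x (φ j)) :=
    hsub.eventually (hlsc xstar c hc2)
  have : c ≤ ⨅ k, f (x k) := ge_of_tendsto hsubconv (hev.mono fun j hj => hj.le)
  linarith
end

section
/- Let f, m : ℝⁿ → ℝ and x̄ ∈ ℝⁿ with m(x̄) = f(x̄). Suppose the model error g := m − f is differentiable on ℝⁿ and there is L > 0 with ‖∇g(x)‖ ≤ L‖x − x̄‖ for all x ∈ ℝⁿ. Let H be a symmetric real n×n matrix with ⟨Hv, v⟩ ≥ μ‖v‖² for all v (μ > 0), let δ ∈ (0,1) and γ > 0. If some x̂ ∈ ℝⁿ satisfies |f(x̂) − m(x̂)| > δ·(γ/2)·‖x̂−x̄‖²_H, then x̂ ≠ x̄ and γ < 2L/(δμ). -/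
open Matrix

theorem stmt4 {n : ℕ} (f m : EuclideanSpace ℝ (Fin n) → ℝ)
    (xbar : EuclideanSpace ℝ (Fin n)) (hcenter : m xbar = f xbar)
    (L μ δ γ : ℝ) (hL : 0 < L) (hμ : 0 < μ) (hδ : δ ∈ Set.Ioo (0 : ℝ) 1) (hγ : 0 < γ)
    -- the model error `g = m - f` is differentiable with `‖∇g(x)‖ ≤ L‖x - x̄‖`
    (hgdiff : Differentiable ℝ (fun x => m x - f x))
    (hgrad : ∀ x, ‖gradient (fun x => m x - f x) x‖ ≤ L * ‖x - xbar‖)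
    (H : Matrix (Fin n) (Fin n) ℝ) (hHsymm : H.IsSymm)
    (hHμ : ∀ v : EuclideanSpace ℝ (Fin n), μ * ‖v‖ ^ 2 ≤ (H.mulVec v) ⬝ᵥ v)
    (xhat : EuclideanSpace ℝ (Fin n))
    (hviol : δ * (γ / 2) * (hNorm H (xhat - xbar)) ^ 2 < |f xhat - m xhat|) :
    xhat ≠ xbar ∧ γ < 2 * L / (δ * μ) := by
  set g : EuclideanSpace ℝ (Fin n) → ℝ := fun x => m x - f x with hg
  have hfd : ∀ x, ‖fderiv ℝ g x‖ = ‖gradient g x‖ := by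
    intro x
    rw [gradient, LinearIsometryEquiv.norm_map]
  -- bound on segment
  have hseg : ∀ x ∈ segment ℝ xbar xhat, ‖fderiv ℝ g x‖ ≤ L * ‖xhat - xbar‖ := by
    intro x hx
    obtain ⟨a, b, ha, hb, hab, hx⟩ := hx
    have hxx : x - xbar = b • (xhat - xbar) := by
      rw [← hx]
      have : a = 1 - b := by linarith
      rw [this]
      module
    calc ‖fderiv ℝ g x‖ = ‖gradient g x‖ := hfd x
      _ ≤ L * ‖x - xbar‖ := hgrad x
      _ ≤ L * ‖xhat - xbar‖ := by
          apply mul_le_mul_of_nonneg_left _ hL.le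
          rw [hxx, norm_smul, Real.norm_eq_abs, abs_of_nonneg hb]
          nlinarith [norm_nonneg (xhat - xbar)]
  have hmvt := (convex_segment xbar xhat).norm_image_sub_le_of_norm_fderiv_le
      (fun x _ => hgdiff x) hseg
      (left_mem_segment ℝ xbar xhat) (right_mem_segment ℝ xbar xhat)
  have hg0 : g xbar = 0 := by simp [hg, hcenter]
  rw [hg0, sub_zero] at hmvt
  have hgabs : |f xhat - m xhat| ≤ L * ‖xhat - xbar‖ ^ 2 := by
    rw [abs_sub_comm]
    calc |m xhat - f xhat| = ‖g xhat‖ := rfl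
      _ ≤ L * ‖xhat - xbar‖ * ‖xhat - xbar‖ := hmvt
      _ = L * ‖xhat - xbar‖ ^ 2 := by ring
  have hHnn : μ * ‖xhat - xbar‖ ^ 2 ≤ (hNorm H (xhat - xbar)) ^ 2 := by
    rw [hNorm, Real.sq_sqrt]
    · exact hHμ _
    · exact le_trans (by positivity) (hHμ _)
  obtain ⟨hδ0, hδ1⟩ := hδ
  have key : δ * (γ / 2) * (μ * ‖xhat - xbar‖ ^ 2) < L * ‖xhat - xbar‖ ^ 2 := by
    calc δ * (γ / 2) * (μ * ‖xhat - xbar‖ ^ 2)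
        ≤ δ * (γ / 2) * (hNorm H (xhat - xbar)) ^ 2 := by
          apply mul_le_mul_of_nonneg_left hHnn; positivity
      _ < |f xhat - m xhat| := hviol
      _ ≤ L * ‖xhat - xbar‖ ^ 2 := hgabs
  have hne : xhat ≠ xbar := by
    intro h
    rw [h] at key
    simp at key
  have hnorm_pos : 0 < ‖xhat - xbar‖ ^ 2 := by
    exact pow_pos (norm_pos_iff.mpr (sub_ne_zero_of_ne hne)) 2
  refine ⟨hne, ?_⟩
  rw [lt_div_iff₀ (by positivity)]
  nlinarith
end

section
/- Let f : ℝⁿ → ℝ, δ ∈ (0,1), μ > 0, 0 < γ_min ≤ γ_max, τ > 1 and L > 0. Let (x^k)_{k∈ℕ} ⊂ ℝⁿ, symmetric matrices H_k with ⟨H_k v, v⟩ ≥ μ‖v‖² for all v, scalars γ_k ≥ γ_min, and functions m_k : ℝⁿ → ℝ with m_k(x^k) = f(x^k). Assume that for every k: either γ_k ≤ τ·γ_max, or there exists x̂^k ∈ ℝⁿ that is a global minimizer of x ↦ m_k(x) + (γ_k/(2τ))‖x−x^k‖²_{H_k} and satisfies |f(x̂^k) − m_k(x̂^k)| > δ·(γ_k/(2τ))·‖x̂^k−x^k‖²_{H_k};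 and that g_k := m_k − f is differentiable on ℝⁿ with ‖∇g_k(x)‖ ≤ L‖x − x^k‖ for all x ∈ ℝⁿ. Then the stepsize parameters are uniformly bounded: γ_k ≤ max{ τ·γ_max, 2τL/(δμ) } for all k ∈ ℕ. -/
open Matrix

theorem stmt5 {n : ℕ} (f : EuclideanSpace ℝ (Fin n) → ℝ)
    (δ μ γmin γmax τ L : ℝ) (hδ : δ ∈ Set.Ioo (0 : ℝ) 1) (hμ : 0 < μ)
    (hγmin : 0 < γmin) (hγminmax : γmin ≤ γmax) (hτ : 1 < τ) (hL : 0 < L)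
    (x : ℕ → EuclideanSpace ℝ (Fin n))
    (H : ℕ → Matrix (Fin n) (Fin n) ℝ)
    (hHsymm : ∀ k, (H k).IsSymm)
    (hHμ : ∀ k (v : EuclideanSpace ℝ (Fin n)), μ * ‖v‖ ^ 2 ≤ ((H k).mulVec v) ⬝ᵥ v)
    (γ : ℕ → ℝ) (hγ : ∀ k, γmin ≤ γ k)
    (m : ℕ → EuclideanSpace ℝ (Fin n) → ℝ)
    (hcenter : ∀ k, m k (x k) = f (x k))
    -- backtracking: either the first trial parameter (at most `τ * γmax`) was accepted,
    -- or the last rejected trial with parameter `γ k / τ` violates the acceptance criterion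
    (hback : ∀ k, γ k ≤ τ * γmax ∨
      ∃ xhat : EuclideanSpace ℝ (Fin n),
        (∀ y, m k xhat + γ k / (2 * τ) * (hNorm (H k) (xhat - x k)) ^ 2 ≤
          m k y + γ k / (2 * τ) * (hNorm (H k) (y - x k)) ^ 2) ∧
        δ * (γ k / (2 * τ)) * (hNorm (H k) (xhat - x k)) ^ 2 < |f xhat - m k xhat|)
    -- the model error `g_k = m_k - f` is differentiable with `‖∇g_k(x)‖ ≤ L‖x - x^k‖`
    (hgdiff : ∀ k, Differentiable ℝ (fun y => m k y - f y))
    (hgrad : ∀ k y, ‖gradient (fun y => m k y - f y) y‖ ≤ L * ‖y - x k‖) :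
    ∀ k, γ k ≤ max (τ * γmax) (2 * τ * L / (δ * μ)) := by
  intro k
  rcases hback k with h | ⟨xhat, _, hviol⟩
  · exact le_trans h (le_max_left _ _)
  · set g : EuclideanSpace ℝ (Fin n) → ℝ := fun y => m k y - f y with hg
    set d := xhat - x k with hd
    have hτ0 : (0:ℝ) < τ := lt_trans one_pos hτ
    have hγk : 0 < γ k := lt_of_lt_of_le hγmin (hγ k)
    -- fderiv bound
    have hfd : ∀ y, ‖fderiv ℝ g y‖ ≤ L * ‖y - x k‖ := by
      intro y
      have := hgrad k y
      rwa [gradient, LinearIsometryEquiv.norm_map] at this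
    -- mean value on segment
    have hseg : ∀ y ∈ segment ℝ (x k) xhat, ‖fderiv ℝ g y‖ ≤ L * ‖d‖ := by
      intro y hy
      rcases hy with ⟨a, b, ha, hb, hab, rfl⟩
      refine le_trans (hfd _) ?_
      have : a • x k + b • xhat - x k = b • d := by
        rw [hd]
        have : a = 1 - b := by linarith
        rw [this]; module
      rw [this, norm_smul]
      have : ‖(b:ℝ)‖ ≤ 1 := by rw [Real.norm_eq_abs, abs_of_nonneg hb]; linarith
      have hL' : 0 ≤ L := le_of_lt hL
      calc L * (‖(b:ℝ)‖ * ‖d‖) ≤ L * (1 * ‖d‖) := by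
            apply mul_le_mul_of_nonneg_left _ hL'
            exact mul_le_mul_of_nonneg_right this (norm_nonneg _)
        _ = L * ‖d‖ := by ring
    have hmvt : ‖g xhat - g (x k)‖ ≤ L * ‖d‖ * ‖xhat - x k‖ :=
      (convex_segment _ _).norm_image_sub_le_of_norm_fderiv_le
        (fun y _ => (hgdiff k).differentiableAt) hseg
        (left_mem_segment ℝ _ _) (right_mem_segment ℝ _ _)
    have hg0 : g (x k) = 0 := by simp [hg, hcenter k]
    have habs : |f xhat - m k xhat| ≤ L * ‖d‖ ^ 2 := by
      have : |f xhat - m k xhat| = ‖g xhat - g (x k)‖ := by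
        rw [hg0, sub_zero, Real.norm_eq_abs, hg, abs_sub_comm]
      rw [this]; calc ‖g xhat - g (x k)‖ ≤ L * ‖d‖ * ‖xhat - x k‖ := hmvt
        _ = L * ‖d‖ ^ 2 := by rw [← hd]; ring
    have hHd : μ * ‖d‖ ^ 2 ≤ (H k).mulVec d ⬝ᵥ d := hHμ k d
    have hHd0 : 0 ≤ (H k).mulVec d ⬝ᵥ d :=
      le_trans (mul_nonneg hμ.le (sq_nonneg _)) hHd
    have hsq : (hNorm (H k) d) ^ 2 = (H k).mulVec d ⬝ᵥ d := Real.sq_sqrt hHd0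
    have key : δ * (γ k / (2 * τ)) * (μ * ‖d‖ ^ 2) < L * ‖d‖ ^ 2 := by
      calc δ * (γ k / (2 * τ)) * (μ * ‖d‖ ^ 2)
          ≤ δ * (γ k / (2 * τ)) * ((H k).mulVec d ⬝ᵥ d) := by
            apply mul_le_mul_of_nonneg_left hHd
            exact mul_nonneg hδ.1.le (div_nonneg hγk.le (by linarith))
        _ = δ * (γ k / (2 * τ)) * (hNorm (H k) d) ^ 2 := by rw [hsq]
        _ < |f xhat - m k xhat| := hviol
        _ ≤ L * ‖d‖ ^ 2 := habs
    have hdpos : 0 < ‖d‖ := by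
      by_contra h
      push_neg at h
      have : ‖d‖ = 0 := le_antisymm h (norm_nonneg _)
      rw [this] at key
      nlinarith
    have hδ0 := hδ.1
    have h2τ : (0:ℝ) < 2 * τ := by linarith
    have key' : δ * γ k * (μ * ‖d‖ ^ 2) < L * ‖d‖ ^ 2 * (2 * τ) := by
      have heq : δ * (γ k / (2 * τ)) * (μ * ‖d‖ ^ 2)
          = δ * γ k * (μ * ‖d‖ ^ 2) / (2 * τ) := by ring
      rw [heq] at key
      exact (div_lt_iff₀ h2τ).mp key
    have hfinal : γ k ≤ 2 * τ * L / (δ * μ) := by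
      rw [le_div_iff₀ (mul_pos hδ0 hμ)]
      nlinarith [key', mul_pos hdpos hdpos]
    exact le_trans hfinal (le_max_right _ _)
end

section
/- Let h : ℝ^m → ℝ be differentiable with ∇h Lipschitz continuous with constant L₁ > 0, and let A : ℝⁿ → ℝ^m be continuously differentiable such that the gradient of the composition h∘A is Lipschitz continuous with constant L₂ > 0. Fix x̄ ∈ ℝⁿ and define g : ℝⁿ → ℝ by g(x) := h(A(x̄) + DA(x̄)(x − x̄)) − h(A(x)), where DA(x̄) is the Jacobian of A at x̄. Then g is differentiable and ‖∇g(x)‖ ≤ (L₁·‖DA(x̄)‖² + L₂)·‖x − x̄‖ for all x ∈ ℝⁿ, where ‖DA(x̄)‖ is the operator norm of DA(x̄). -/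
/-!
Write `T = DA(x̄)` and `ℓ(x) = A(x̄) + T(x - x̄)`. By the chain rule,
`Dg(x) = Dh(ℓ x) ∘ T - D(h ∘ A)(x)`, and since `D(h ∘ A)(x̄) = Dh(A x̄) ∘ T` this is
`(Dh(ℓ x) - Dh(ℓ x̄)) ∘ T - (D(h ∘ A)(x) - D(h ∘ A)(x̄))`. The first term is at most
`L₁ ‖ℓ x - ℓ x̄‖ ‖T‖ ≤ L₁ ‖T‖² ‖x - x̄‖`, the second at most `L₂ ‖x - x̄‖`.
-/

open ContinuousLinearMap

theorem norm_gradient_sub_gradient {E : Type*} [NormedAddCommGroup E] [InnerProductSpace ℝ E]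
    [CompleteSpace E] (f : E → ℝ) (y z : E) :
    ‖gradient f y - gradient f z‖ = ‖fderiv ℝ f y - fderiv ℝ f z‖ := by
  rw [gradient, gradient, ← LinearIsometryEquiv.map_sub, LinearIsometryEquiv.norm_map]

section Linearization

variable {E F G : Type*} [NormedAddCommGroup E] [NormedSpace ℝ E] [NormedAddCommGroup F]
  [NormedSpace ℝ F] [NormedAddCommGroup G] [NormedSpace ℝ G]

noncomputable def linearization (A : E → F) (x₀ : E) (x : E) : F :=
  A x₀ + fderiv ℝ A x₀ (x - x₀)

theorem hasFDerivAt_linearization (A : E → F) (x₀ x : E) :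
    HasFDerivAt (linearization A x₀) (fderiv ℝ A x₀) x := by
  have h := (fderiv ℝ A x₀).hasFDerivAt.comp x ((hasFDerivAt_id x).sub_const x₀)
  rw [comp_id] at h
  exact h.const_add (A x₀)

theorem differentiable_linearization (A : E → F) (x₀ : E) :
    Differentiable ℝ (linearization A x₀) :=
  fun x => (hasFDerivAt_linearization A x₀ x).differentiableAt

theorem linearization_sub_self (A : E → F) (x₀ x : E) :
    linearization A x₀ x - A x₀ = fderiv ℝ A x₀ (x - x₀) := by
  simp [linearization]

variable {h : F → G} {A : E → F}

theorem fderiv_comp_linearization_sub_comp (hh : Differentiable ℝ h) (hA : Differentiable ℝ A)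
    (x₀ x : E) :
    fderiv ℝ (fun x => h (linearization A x₀ x) - h (A x)) x =
      (fderiv ℝ h (linearization A x₀ x) - fderiv ℝ h (A x₀)).comp (fderiv ℝ A x₀) -
        (fderiv ℝ (fun w => h (A w)) x - fderiv ℝ (fun w => h (A w)) x₀) := by
  have hmodel : HasFDerivAt (fun x => h (linearization A x₀ x))
      ((fderiv ℝ h (linearization A x₀ x)).comp (fderiv ℝ A x₀)) x :=
    (hh _).hasFDerivAt.comp x (hasFDerivAt_linearization A x₀ x)
  have hcomp : HasFDerivAt (fun w => h (A w)) (fderiv ℝ (fun w => h (A w)) x) x :=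
    (hh.comp hA x).hasFDerivAt
  rw [(hmodel.fun_sub hcomp).fderiv, fderiv_fun_comp x₀ (hh (A x₀)) (hA x₀), sub_comp]
  abel

theorem norm_fderiv_comp_linearization_sub_comp_le (hh : Differentiable ℝ h)
    (hA : Differentiable ℝ A) {L₁ L₂ : ℝ} (hL₁ : 0 ≤ L₁)
    (hh_lip : ∀ y z, ‖fderiv ℝ h y - fderiv ℝ h z‖ ≤ L₁ * ‖y - z‖)
    (hcomp_lip : ∀ y z, ‖fderiv ℝ (fun w => h (A w)) y - fderiv ℝ (fun w => h (A w)) z‖ ≤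
      L₂ * ‖y - z‖)
    (x₀ x : E) :
    ‖fderiv ℝ (fun x => h (linearization A x₀ x) - h (A x)) x‖ ≤
      (L₁ * ‖fderiv ℝ A x₀‖ ^ 2 + L₂) * ‖x - x₀‖ := by
  set T := fderiv ℝ A x₀
  have hmodel : ‖fderiv ℝ h (linearization A x₀ x) - fderiv ℝ h (A x₀)‖ ≤
      L₁ * (‖T‖ * ‖x - x₀‖) := by
    refine (hh_lip _ _).trans (mul_le_mul_of_nonneg_left ?_ hL₁)
    rw [linearization_sub_self]
    exact T.le_opNorm _
  rw [fderiv_comp_linearization_sub_comp hh hA]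
  calc _ ≤ ‖(fderiv ℝ h (linearization A x₀ x) - fderiv ℝ h (A x₀)).comp T‖ +
          ‖fderiv ℝ (fun w => h (A w)) x - fderiv ℝ (fun w => h (A w)) x₀‖ :=
        norm_sub_le _ _
    _ ≤ ‖fderiv ℝ h (linearization A x₀ x) - fderiv ℝ h (A x₀)‖ * ‖T‖ + L₂ * ‖x - x₀‖ :=
        add_le_add (opNorm_comp_le _ _) (hcomp_lip _ _)
    _ ≤ L₁ * (‖T‖ * ‖x - x₀‖) * ‖T‖ + L₂ * ‖x - x₀‖ := by gcongr
    _ = (L₁ * ‖T‖ ^ 2 + L₂) * ‖x - x₀‖ := by ring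

end Linearization

theorem stmt7_general {n m : ℕ} (h : EuclideanSpace ℝ (Fin m) → ℝ)
    (A : EuclideanSpace ℝ (Fin n) → EuclideanSpace ℝ (Fin m))
    (L₁ L₂ : ℝ) (hL₁ : 0 < L₁)
    (hdiff : Differentiable ℝ h)
    (hgradlip : ∀ y z, ‖gradient h y - gradient h z‖ ≤ L₁ * ‖y - z‖)
    (hA : ContDiff ℝ 1 A)
    (hcomplip : ∀ y z, ‖gradient (fun w => h (A w)) y - gradient (fun w => h (A w)) z‖ ≤
      L₂ * ‖y - z‖)
    (xbar : EuclideanSpace ℝ (Fin n))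
    (g : EuclideanSpace ℝ (Fin n) → ℝ)
    (hg : ∀ x, g x = h (A xbar + fderiv ℝ A xbar (x - xbar)) - h (A x)) :
    Differentiable ℝ g ∧
      ∀ x, ‖gradient g x‖ ≤ (L₁ * ‖fderiv ℝ A xbar‖ ^ 2 + L₂) * ‖x - xbar‖ := by
  have hAd : Differentiable ℝ A := hA.differentiable one_ne_zero
  obtain rfl : g = fun x => h (linearization A xbar x) - h (A x) := funext hg
  refine ⟨(hdiff.comp (differentiable_linearization A xbar)).sub (hdiff.comp hAd), fun x => ?_⟩
  rw [gradient, LinearIsometryEquiv.norm_map]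
  refine norm_fderiv_comp_linearization_sub_comp_le hdiff hAd hL₁.le (fun y z => ?_)
    (fun y z => ?_) xbar x
  · rw [← norm_gradient_sub_gradient]; exact hgradlip y z
  · rw [← norm_gradient_sub_gradient]; exact hcomplip y z

theorem stmt7 {n m : ℕ} (h : EuclideanSpace ℝ (Fin m) → ℝ)
    (A : EuclideanSpace ℝ (Fin n) → EuclideanSpace ℝ (Fin m))
    (L₁ L₂ : ℝ) (hL₁ : 0 < L₁) (hL₂ : 0 < L₂)
    (hdiff : Differentiable ℝ h)
    (hgradlip : ∀ y z, ‖gradient h y - gradient h z‖ ≤ L₁ * ‖y - z‖)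
    (hA : ContDiff ℝ 1 A)
    (hcomplip : ∀ y z, ‖gradient (fun w => h (A w)) y - gradient (fun w => h (A w)) z‖ ≤
      L₂ * ‖y - z‖)
    (xbar : EuclideanSpace ℝ (Fin n))
    (g : EuclideanSpace ℝ (Fin n) → ℝ)
    (hg : ∀ x, g x = h (A xbar + fderiv ℝ A xbar (x - xbar)) - h (A x)) :
    Differentiable ℝ g ∧
      ∀ x, ‖gradient g x‖ ≤ (L₁ * ‖fderiv ℝ A xbar‖ ^ 2 + L₂) * ‖x - xbar‖ :=
  stmt7_general h A L₁ L₂ hL₁ hdiff hgradlip hA hcomplip xbar g hg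
end

section
/- Let β > 0 and let (a_i)_{i≥1} and (Δ_i)_{i≥1} be sequences of nonnegative real numbers satisfying β·a_{i+1}² ≤ Δ_i·a_i for every i ≥ 1. Then for every N ≥ 1: Σ_{i=1}^{N} a_{i+1} ≤ (1/β)·Σ_{i=1}^{N} Δ_i + a_1. In particular, if Σ_{i=1}^{∞} Δ_i < ∞, then Σ_{i=1}^{∞} a_i < ∞. -/
/-!
By AM–GM, `β a_{i+1}² ≤ Δ_i a_i` gives `2 a_{i+1} ≤ Δ_i / β + a_i`. Summing over
`1 ≤ i ≤ N`, the `a_i` on the right are absorbed by the left side, which leaves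
`∑ a_{i+1} + a_{N+1} ≤ (1/β) ∑ Δ_i + a_1`; bounded partial sums of nonnegative terms give summability.
-/

open Finset

lemma two_mul_le_div_add_of_mul_sq_le {β x y d : ℝ} (hβ : 0 < β) (hx : 0 ≤ x) (hy : 0 ≤ y)
    (hd : 0 ≤ d) (h : β * y ^ 2 ≤ d * x) : 2 * y ≤ d / β + x := by
  have hsq : (2 * y) ^ 2 ≤ (d / β + x) ^ 2 := by
    have hy2 : y ^ 2 ≤ d / β * x := by
      rw [div_mul_eq_mul_div, le_div_iff₀ hβ]
      linarith
    nlinarith [sq_nonneg (d / β - x)]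
  exact (pow_le_pow_iff_left₀ (by positivity) (by positivity) two_ne_zero).mp hsq

lemma sum_range_add_le_of_two_mul_le {b e : ℕ → ℝ} (h : ∀ n, 2 * b (n + 1) ≤ e n + b n) (N : ℕ) :
    ∑ i ∈ range N, b (i + 1) + b N ≤ ∑ i ∈ range N, e i + b 0 := by
  induction N with
  | zero => simp
  | succ N ih =>
    rw [sum_range_succ, sum_range_succ]
    linarith [h N]

lemma summable_of_two_mul_le {b e : ℕ → ℝ} (hb : ∀ n, 0 ≤ b n) (he : ∀ n, 0 ≤ e n)
    (h : ∀ n, 2 * b (n + 1) ≤ e n + b n) (hs : Summable e) : Summable b := by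
  refine (summable_nat_add_iff 1).mp <| summable_of_sum_range_le (c := ∑' i, e i + b 0) (fun n ↦ hb _) fun N ↦ ?_
  calc ∑ i ∈ range N, b (i + 1)
      ≤ ∑ i ∈ range N, e i + b 0 := by linarith [sum_range_add_le_of_two_mul_le h N, hb N]
    _ ≤ ∑' i, e i + b 0 := by gcongr; exact hs.sum_le_tsum _ fun i _ ↦ he i

lemma sum_Icc_one_eq_sum_range (f : ℕ → ℝ) (N : ℕ) :
    ∑ i ∈ Icc 1 N, f i = ∑ i ∈ range N, f (i + 1) := by
  rw [← Finset.Ico_add_one_right_eq_Icc, sum_Ico_eq_sum_range]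
  simp [add_comm]

theorem stmt13 (β : ℝ) (hβ : 0 < β) (a Δ : ℕ → ℝ)
    (ha : ∀ i ≥ 1, 0 ≤ a i) (hΔ : ∀ i ≥ 1, 0 ≤ Δ i)
    (hrec : ∀ i ≥ 1, β * a (i + 1) ^ 2 ≤ Δ i * a i) :
    (∀ N ≥ 1, ∑ i ∈ Finset.Icc 1 N, a (i + 1) ≤
      (1 / β) * ∑ i ∈ Finset.Icc 1 N, Δ i + a 1) ∧
    (Summable (fun i => Δ (i + 1)) → Summable (fun i => a (i + 1))) := by
  have ha' (n : ℕ) : 0 ≤ a (n + 1) := ha _ n.succ_pos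
  have hΔ' (n : ℕ) : 0 ≤ Δ (n + 1) / β := div_nonneg (hΔ _ n.succ_pos) hβ.le
  have hstep (n : ℕ) : 2 * a (n + 1 + 1) ≤ Δ (n + 1) / β + a (n + 1) :=
    two_mul_le_div_add_of_mul_sq_le hβ (ha' n) (ha' _) (hΔ _ n.succ_pos) (hrec _ n.succ_pos)
  refine ⟨fun N _ ↦ ?_, fun hs ↦ summable_of_two_mul_le (b := fun n ↦ a (n + 1)) ha' hΔ' hstep
    (hs.div_const β)⟩
  have := sum_range_add_le_of_two_mul_le (b := fun n ↦ a (n + 1)) hstep N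
  rw [sum_Icc_one_eq_sum_range, sum_Icc_one_eq_sum_range, mul_sum]
  simp only [one_div_mul_eq_div]
  linarith [ha' N]
end

section
/- Let x̄ ∈ ℝⁿ, let m : ℝⁿ → ℝ be lower semicontinuous and bounded from below by an affine function (i.e., there exist a ∈ ℝⁿ and b ∈ ℝ with m(x) ≥ ⟨a, x⟩ + b for all x), let H be a symmetric real n×n matrix with ⟨Hv, v⟩ ≥ μ‖v‖² for all v (μ > 0), and let (γ_i)_{i∈ℕ} be positive reals with γ_i → ∞. If for every i, x_i is a global minimizer of x ↦ m(x) + (γ_i/2)‖x − x̄‖²_H, then x_i → x̄, m(x_i) → m(x̄), and γ_i·‖x_i − x̄‖²_H → 0 as i → ∞. -/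
open Matrix Filter RealInnerProductSpace

theorem stmt14 {n : ℕ} (xbar : EuclideanSpace ℝ (Fin n))
    (m : EuclideanSpace ℝ (Fin n) → ℝ)
    (hlsc : LowerSemicontinuous m)
    (haff : ∃ (a : EuclideanSpace ℝ (Fin n)) (b : ℝ), ∀ x, ⟪a, x⟫ + b ≤ m x)
    (H : Matrix (Fin n) (Fin n) ℝ) (hHsymm : H.IsSymm)
    (μ : ℝ) (hμ : 0 < μ)
    (hHμ : ∀ v : EuclideanSpace ℝ (Fin n), μ * ‖v‖ ^ 2 ≤ (H.mulVec v) ⬝ᵥ v)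
    (γ : ℕ → ℝ) (hγpos : ∀ i, 0 < γ i) (hγ : Tendsto γ atTop atTop)
    (x : ℕ → EuclideanSpace ℝ (Fin n))
    (hmin : ∀ i y, m (x i) + γ i / 2 * (hNorm H (x i - xbar)) ^ 2 ≤
      m y + γ i / 2 * (hNorm H (y - xbar)) ^ 2) :
    Tendsto x atTop (nhds xbar) ∧
      Tendsto (fun i => m (x i)) atTop (nhds (m xbar)) ∧
      Tendsto (fun i => γ i * (hNorm H (x i - xbar)) ^ 2) atTop (nhds 0) := by
  obtain ⟨a, b, hab⟩ := haff
  have hQ0 : ∀ v : EuclideanSpace ℝ (Fin n), 0 ≤ (H.mulVec v) ⬝ᵥ v := by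
    intro v
    refine le_trans ?_ (hHμ v)
    positivity
  have hsq : ∀ v : EuclideanSpace ℝ (Fin n),
      (hNorm H v) ^ 2 = (H.mulVec v) ⬝ᵥ v := fun v => Real.sq_sqrt (hQ0 v)
  have hzero : hNorm H (xbar - xbar) = 0 := by
    rw [sub_self]
    show Real.sqrt ((H.mulVec 0) ⬝ᵥ (0 : Fin n → ℝ)) = 0
    simp
  -- basic inequality
  have hb : ∀ i, m (x i) + γ i / 2 * (hNorm H (x i - xbar)) ^ 2 ≤ m xbar := by
    intro i
    have := hmin i xbar
    rwa [hzero, zero_pow (by norm_num), mul_zero, add_zero] at this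
  have hmx : ∀ i, m (x i) ≤ m xbar := by
    intro i
    have h1 : 0 ≤ γ i / 2 * (hNorm H (x i - xbar)) ^ 2 :=
      mul_nonneg (by linarith [hγpos i]) (sq_nonneg _)
    linarith [hb i]
  set d : ℕ → ℝ := fun i => ‖x i - xbar‖ with hd
  set C : ℝ := m xbar - b - ⟪a, xbar⟫ with hC
  have key : ∀ i, γ i * μ / 2 * d i ^ 2 ≤ C + ‖a‖ * d i := by
    intro i
    have h1 : γ i / 2 * (μ * ‖x i - xbar‖ ^ 2) ≤ γ i / 2 * (hNorm H (x i - xbar)) ^ 2 := by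
      have := hHμ (x i - xbar)
      rw [hsq]
      nlinarith [(hγpos i).le]
    have h2 : ⟪a, x i⟫ + b ≤ m (x i) := hab (x i)
    have h3 : ⟪a, xbar⟫ - ‖a‖ * d i ≤ ⟪a, x i⟫ := by
      have h4 : ⟪a, x i - xbar⟫ = ⟪a, x i⟫ - ⟪a, xbar⟫ := inner_sub_right a (x i) xbar
      have h5 : ‖x i - xbar‖ = d i := rfl
      have := abs_real_inner_le_norm a (x i - xbar)
      rw [h4, h5] at this
      have := abs_le.mp this
      linarith [this.1]
    have := hb i
    nlinarith
  -- d i ^ 2 tends to 0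
  have hden : Tendsto (fun i => γ i * μ / 2 - ‖a‖) atTop atTop := by
    have h1 : Tendsto (fun i => γ i * (μ / 2)) atTop atTop :=
      hγ.atTop_mul_const (by positivity)
    have h2 : Tendsto (fun i => γ i * (μ / 2) + -‖a‖) atTop atTop :=
      tendsto_atTop_add_const_right _ _ h1
    refine h2.congr fun i => by ring
  have hdle : ∀ᶠ i in atTop, d i ^ 2 ≤ (C + ‖a‖) / (γ i * μ / 2 - ‖a‖) := by
    filter_upwards [hden.eventually_ge_atTop 1] with i hi
    have ht : (0:ℝ) < γ i * μ / 2 - ‖a‖ := lt_of_lt_of_le one_pos hi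
    rw [le_div_iff₀ ht]
    have hda : d i ≤ 1 + d i ^ 2 := by nlinarith [sq_nonneg (d i - 1), norm_nonneg (x i - xbar)]
    have := key i
    nlinarith [norm_nonneg a, sq_nonneg (d i), mul_le_mul_of_nonneg_left hda (norm_nonneg a)]
  have hd2 : Tendsto (fun i => d i ^ 2) atTop (nhds 0) := by
    refine tendsto_of_tendsto_of_tendsto_of_le_of_le' tendsto_const_nhds
      (Tendsto.div_atTop tendsto_const_nhds hden) ?_ hdle
    exact Eventually.of_forall fun i => sq_nonneg _
  have hdto : Tendsto d atTop (nhds 0) := by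
    have h1 : Tendsto (fun i => Real.sqrt (d i ^ 2)) atTop (nhds (Real.sqrt 0)) :=
      (Real.continuous_sqrt.tendsto 0).comp hd2
    rw [Real.sqrt_zero] at h1
    refine h1.congr fun i => Real.sqrt_sq (norm_nonneg _)
  have hx : Tendsto x atTop (nhds xbar) := by
    rw [tendsto_iff_norm_sub_tendsto_zero]
    exact hdto
  refine ⟨hx, ?_, ?_⟩
  · -- m (x i) → m xbar
    have hm : Tendsto (fun i => m (x i)) atTop (nhds (m xbar)) := by
      rw [tendsto_order]
      constructor
      · intro y hy
        exact hx.eventually (hlsc xbar y hy)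
      · intro y hy
        exact Eventually.of_forall fun i => lt_of_le_of_lt (hmx i) hy
    exact hm
  · -- γ i * Q → 0
    have hm : Tendsto (fun i => m (x i)) atTop (nhds (m xbar)) := by
      rw [tendsto_order]
      constructor
      · intro y hy
        exact hx.eventually (hlsc xbar y hy)
      · intro y hy
        exact Eventually.of_forall fun i => lt_of_le_of_lt (hmx i) hy
    have hub : Tendsto (fun i => 2 * (m xbar - m (x i))) atTop (nhds 0) := by
      have := (tendsto_const_nhds (x := m xbar) (f := atTop)).sub hm
      have h2 := this.const_mul 2
      simpa using h2
    refine tendsto_of_tendsto_of_tendsto_of_le_of_le' tendsto_const_nhds hub ?_ ?_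
    · exact Eventually.of_forall fun i => mul_nonneg (hγpos i).le (sq_nonneg _)
    · refine Eventually.of_forall fun i => ?_
      have := hb i
      nlinarith [(hγpos i).le, sq_nonneg (hNorm H (x i - xbar))]
end
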